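/- Let φ be the ring endomorphism of Q[t₁,...,t₈] with φ(tᵢ) = tᵢ - (1/4)c₁, where c₁ = t₁+⋯+t₈, and let cᵢ be the elementary symmetric polynomials. Then for every 3 ≤ i ≤ 8, φ(cᵢ) ≡ cᵢ - ((9-i)/4)·c_{i-1}·c₁ modulo the ideal (c₁²). -/

import Mathlib

open MvPolynomial Finset

/-- `c i`: the `i`-th elementary symmetric polynomial in `t₁,…,t₈`. -/
noncomputable def c (i : ℕ) : MvPolynomial (Fin 8) ℚ :=
  ∑ s ∈ Finset.powersetCard i (Finset.univ : Finset (Fin 8)), ∏ j ∈ s, X j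

/-- `q i`: the `i`-th elementary symmetric polynomial in `t₁²,…,t₈²`. -/
noncomputable def q (i : ℕ) : MvPolynomial (Fin 8) ℚ :=
  ∑ s ∈ Finset.powersetCard i (Finset.univ : Finset (Fin 8)), ∏ j ∈ s, (X j) ^ 2

/-- `e6 = t₁t₂t₃t₄t₅t₆`. -/
noncomputable def e6 : MvPolynomial (Fin 8) ℚ :=
  X 0 * X 1 * X 2 * X 3 * X 4 * X 5

/-- The algebra endomorphism `φ` with `φ(tᵢ) = tᵢ - (1/4)(t₁+⋯+t₈)`. -/
noncomputable def phi : MvPolynomial (Fin 8) ℚ →ₐ[ℚ] MvPolynomial (Fin 8) ℚ :=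
  aeval (fun i : Fin 8 => X i - C (1/4 : ℚ) * ∑ j : Fin 8, X j)

/-! Modulo `a²`, a product `∏_{j ∈ s} (tⱼ - a)` equals its first-order expansion
`∏_{j ∈ s} tⱼ - a ∑_{j ∈ s} ∏_{k ∈ s, k ≠ j} tₖ`. Summing over the `i`-subsets `s`, every
`(i-1)`-subset `t` arises once for each of the `8 - (i-1)` indices outside `t`, so
`φ(cᵢ) ≡ cᵢ - (9 - i) a cᵢ₋₁` with `a = c₁/4`, and `(a²) ⊆ (c₁²)`. -/

theorem Finset.prod_sub_of_sq_eq_zero {R ι : Type*} [CommRing R] [DecidableEq ι] (s : Finset ι)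
    (f : ι → R) {b : R} (hb : b ^ 2 = 0) :
    ∏ j ∈ s, (f j - b) = ∏ j ∈ s, f j - b * ∑ j ∈ s, ∏ k ∈ s.erase j, f k := by
  induction s using Finset.induction_on with
  | empty => simp
  | @insert x s hx ih =>
    have herase : ∀ j ∈ s, ∏ k ∈ (insert x s).erase j, f k = f x * ∏ k ∈ s.erase j, f k := by
      intro j hj
      rw [erase_insert_of_ne (by rintro rfl; exact hx hj),
        prod_insert fun h => hx (mem_of_mem_erase h)]
    rw [prod_insert hx, prod_insert hx, sum_insert hx, erase_insert hx, sum_congr rfl herase,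
      ← mul_sum, ih]
    linear_combination (∑ j ∈ s, ∏ k ∈ s.erase j, f k) * hb

theorem Finset.prod_sub_sub_mem_span_sq {R ι : Type*} [CommRing R] [DecidableEq ι]
    (s : Finset ι) (f : ι → R) (a : R) :
    ∏ j ∈ s, (f j - a) - (∏ j ∈ s, f j - a * ∑ j ∈ s, ∏ k ∈ s.erase j, f k) ∈
      Ideal.span {a ^ 2} := by
  rw [← Ideal.Quotient.eq]
  have hsq : Ideal.Quotient.mk (Ideal.span {a ^ 2}) a ^ 2 = 0 := by
    rw [← map_pow, Ideal.Quotient.eq_zero_iff_mem]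
    exact Ideal.subset_span rfl
  simpa only [map_prod, map_sub, map_mul, map_sum] using prod_sub_of_sq_eq_zero s _ hsq

theorem Finset.sum_powersetCard_succ_sum_erase {ι M : Type*} [AddCommMonoid M] [DecidableEq ι]
    (u : Finset ι) (i : ℕ) (g : Finset ι → M) :
    ∑ s ∈ u.powersetCard (i + 1), ∑ j ∈ s, g (s.erase j)
      = ∑ t ∈ u.powersetCard i, (#u - i) • g t := by
  have hcount : ∀ t ∈ u.powersetCard i, ∑ _j ∈ u \ t, g t = (#u - i) • g t := by
    intro t ht
    rw [mem_powersetCard] at ht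
    rw [sum_const, card_sdiff_of_subset ht.1, ht.2]
  rw [← sum_congr rfl hcount, sum_sigma', sum_sigma']
  refine sum_nbij' (fun p => ⟨p.1.erase p.2, p.2⟩) (fun p => ⟨insert p.2 p.1, p.2⟩)
    ?_ ?_ ?_ ?_ fun _ _ => rfl
  · rintro ⟨s, j⟩ hp
    simp only [mem_sigma, mem_powersetCard, mem_sdiff] at hp ⊢
    obtain ⟨⟨hsub, hcard⟩, hj⟩ := hp
    exact ⟨⟨(erase_subset _ _).trans hsub, by rw [card_erase_of_mem hj, hcard, Nat.add_sub_cancel]⟩,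
      hsub hj, notMem_erase _ _⟩
  · rintro ⟨t, j⟩ hp
    simp only [mem_sigma, mem_powersetCard, mem_sdiff] at hp ⊢
    obtain ⟨⟨hsub, hcard⟩, hj, hjt⟩ := hp
    exact ⟨⟨insert_subset hj hsub, by rw [card_insert_of_notMem hjt, hcard]⟩, mem_insert_self _ _⟩
  · rintro ⟨s, j⟩ hp
    simp only [mem_sigma] at hp
    simp [insert_erase hp.2]
  · rintro ⟨t, j⟩ hp
    simp only [mem_sigma, mem_sdiff] at hp
    simp [erase_insert hp.2.2]

theorem MvPolynomial.aeval_X_sub_esymm_succ_mem_span_sq {σ R : Type*} [Fintype σ]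
    [CommRing R] (a : MvPolynomial σ R) (i : ℕ) :
    aeval (fun j => X j - a) (esymm σ R (i + 1))
        - (esymm σ R (i + 1) - (Fintype.card σ - i) • (a * esymm σ R i)) ∈
      Ideal.span {a ^ 2} := by
  classical
  have hlin : (Fintype.card σ - i) • (a * esymm σ R i)
      = a * ∑ s ∈ powersetCard (i + 1) univ, ∑ j ∈ s, ∏ k ∈ s.erase j, X k := by
    rw [sum_powersetCard_succ_sum_erase univ i (fun t => ∏ k ∈ t, X k), card_univ, ← smul_sum,
      mul_smul_comm, esymm]
  rw [hlin, mul_sum, esymm, map_sum, ← sum_sub_distrib, ← sum_sub_distrib]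
  refine Ideal.sum_mem _ fun s _ => ?_
  simpa only [map_prod, map_sub, aeval_X] using prod_sub_sub_mem_span_sq s X a

theorem c_eq_esymm (i : ℕ) : c i = esymm (Fin 8) ℚ i := rfl

theorem phi_eq_aeval : phi = aeval fun j => X j - C (1 / 4 : ℚ) * c 1 := by
  rw [phi, c_eq_esymm, esymm_one]

theorem stmt2 :
    ∀ i : ℕ, 3 ≤ i → i ≤ 8 →
      phi (c i) - (c i - C (((9 : ℚ) - i) / 4) * c (i - 1) * c 1) ∈
        Ideal.span {c 1 ^ 2} := by
  intro i h3 h8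
  obtain ⟨k, rfl⟩ : ∃ k, i = k + 1 := ⟨i - 1, by omega⟩
  set a := C (1 / 4 : ℚ) * c 1 with ha
  have hcoef : C (((9 : ℚ) - ↑(k + 1)) / 4) * c (k + 1 - 1) * c 1 = (8 - k) • (a * c k) := by
    have h : ((9 : ℚ) - ↑(k + 1)) / 4 = ((8 - k : ℕ) : ℚ) * (1 / 4) := by
      push_cast [Nat.cast_sub (by omega : k ≤ 8)]
      ring
    rw [Nat.add_sub_cancel, h, C_mul, nsmul_eq_mul, ← C_eq_coe_nat]
    ring
  have hspan : Ideal.span {a ^ 2} ≤ Ideal.span {c 1 ^ 2} := by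
    rw [Ideal.span_singleton_le_span_singleton, ha, mul_pow]
    exact dvd_mul_left _ _
  have key := aeval_X_sub_esymm_succ_mem_span_sq a k
  rw [Fintype.card_fin] at key
  rw [phi_eq_aeval, hcoef]
  exact hspan key
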